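/- arXiv:2408.00564 — 4 statements merged into one kernel-verified Lean document; each statement's English description precedes it below -/
import Mathlib

section
/- Let (X,d) be a complete metric space such that there exists k > 0 with the property: for all x, y, z ∈ X and every geodesic γ:[0,1]→X from x to y, d(z,γ(t))² ≤ (1-t)d(z,x)² + t d(z,y)² - (k/2)t(1-t)d(x,y)² for all t ∈ [0,1]. Then for every Borel probability measure μ on X with finite second moment, the function z ↦ ∫ d(z,x)² dμ(x) admits a unique minimizer (the barycenter of μ). -/
/-!
Write `F z = ∫ d(z,x)² dμ(x)`. The convexity inequality at `t = 1/2`, integrated against `μ`,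
shows that the midpoint `w` of a geodesic from `z` to `z'` satisfies
`F w ≤ (F z + F z') / 2 - (k/8) d(z,z')²`. Hence two points whose values are within `δ` of
`inf F` are at distance at most `√(8δ/k)`: a minimizing sequence is Cauchy, its limit is a
minimizer because `F` is continuous (dominated convergence), and two minimizers coincide.
-/

open MeasureTheory

/-- A curve `γ : ℝ → X` is a geodesic (on `[0,1]`) if it has constant speed `L`
with `dist (γ s) (γ t) = L * |s - t|` for all `s, t ∈ [0,1]`. -/
def IsGeodesic {X : Type*} [MetricSpace X] (γ : ℝ → X) : Prop :=
  ∃ L : ℝ, 0 ≤ L ∧ ∀ s ∈ Set.Icc (0 : ℝ) 1, ∀ t ∈ Set.Icc (0 : ℝ) 1,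
    dist (γ s) (γ t) = L * |s - t|

open Filter Topology

theorem LowerSemicontinuousAt.le_of_tendsto {α ι γ : Type*} [TopologicalSpace α]
    [LinearOrder γ] [DenselyOrdered γ] [TopologicalSpace γ] [OrderTopology γ]
    {f : α → γ} {x : α} {l : Filter ι} [l.NeBot] {u : ι → α} {m : γ}
    (hf : LowerSemicontinuousAt f x) (hu : Tendsto u l (𝓝 x)) (hfu : Tendsto (f ∘ u) l (𝓝 m)) :
    f x ≤ m := by
  by_contra! h
  obtain ⟨m', hm, hm'⟩ := exists_between h
  obtain ⟨i, hi, hi'⟩ :=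
    ((hu.eventually (hf m' hm')).and (hfu.eventually (gt_mem_nhds hm))).exists
  exact lt_asymm hi hi'

section Midpoint

variable {X : Type*} [MetricSpace X] {F : X → ℝ} {c m : ℝ}

theorem sq_dist_le_of_midpoint_le
    (hmid : ∀ z z', ∃ w, F w ≤ (F z + F z') / 2 - c * dist z z' ^ 2) (hm : ∀ w, m ≤ F w)
    (z z' : X) : c * dist z z' ^ 2 ≤ (F z + F z') / 2 - m := by
  obtain ⟨w, hw⟩ := hmid z z'
  linarith [hm w]

theorem cauchySeq_of_midpoint_le (hc : 0 < c)
    (hmid : ∀ z z', ∃ w, F w ≤ (F z + F z') / 2 - c * dist z z' ^ 2) (hm : ∀ w, m ≤ F w)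
    {z : ℕ → X} (hz : Tendsto (F ∘ z) atTop (𝓝 m)) : CauchySeq z := by
  refine Metric.cauchySeq_iff'.2 fun ε hε => ?_
  have hδ : m < m + c * ε ^ 2 := by linarith [mul_pos hc (pow_pos hε 2)]
  obtain ⟨N, hN⟩ := eventually_atTop.1 (hz.eventually (gt_mem_nhds hδ))
  refine ⟨N, fun n hn => ?_⟩
  have h := sq_dist_le_of_midpoint_le hmid hm (z n) (z N)
  have hn' : F (z n) < m + c * ε ^ 2 := hN n hn
  have hN' : F (z N) < m + c * ε ^ 2 := hN N le_rfl
  have hsq : c * dist (z n) (z N) ^ 2 < c * ε ^ 2 := by linarith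
  exact lt_of_pow_lt_pow_left₀ 2 hε.le (lt_of_mul_lt_mul_left hsq hc.le)

theorem exists_unique_forall_le_of_midpoint_le [CompleteSpace X] [Nonempty X] (hc : 0 < c)
    (hF : LowerSemicontinuous F) (hbdd : BddBelow (Set.range F))
    (hmid : ∀ z z', ∃ w, F w ≤ (F z + F z') / 2 - c * dist z z' ^ 2) :
    ∃! b, ∀ z, F b ≤ F z := by
  have hm : ∀ w, sInf (Set.range F) ≤ F w := fun w => csInf_le hbdd ⟨w, rfl⟩
  obtain ⟨u, -, hu, hu_mem⟩ := exists_seq_tendsto_sInf (Set.range_nonempty F) hbdd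
  choose z hz using hu_mem
  have hFz : Tendsto (F ∘ z) atTop (𝓝 (sInf (Set.range F))) := by
    simpa only [Function.comp_def, hz] using hu
  obtain ⟨b, hb⟩ := cauchySeq_tendsto_of_complete (cauchySeq_of_midpoint_le hc hmid hm hFz)
  have hFb : F b ≤ sInf (Set.range F) := LowerSemicontinuousAt.le_of_tendsto (hF b) hb hFz
  refine ⟨b, fun w => hFb.trans (hm w), fun y hy => ?_⟩
  have h := sq_dist_le_of_midpoint_le hmid hm y b
  have hyb : c * dist y b ^ 2 ≤ 0 := by linarith [hy b]
  have : dist y b ^ 2 = 0 := le_antisymm (nonpos_of_mul_nonpos_right hyb hc) (sq_nonneg _)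
  exact dist_eq_zero.1 (pow_eq_zero_iff two_ne_zero |>.1 this)

end Midpoint

theorem integral_le_half_add_sub_of_le {α : Type*} [MeasurableSpace α] {μ : Measure α}
    [IsProbabilityMeasure μ] {f g h : α → ℝ} {a : ℝ}
    (hf : Integrable f μ) (hg : Integrable g μ) (hh : Integrable h μ)
    (hfgh : ∀ x, f x ≤ (g x + h x) / 2 - a) :
    ∫ x, f x ∂μ ≤ (∫ x, g x ∂μ + ∫ x, h x ∂μ) / 2 - a := by
  have hgh : Integrable (fun x => (g x + h x) / 2) μ := (hg.add hh).div_const 2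
  calc ∫ x, f x ∂μ ≤ ∫ x, ((g x + h x) / 2 - a) ∂μ :=
        integral_mono hf (hgh.sub (integrable_const a)) hfgh
    _ = (∫ x, g x ∂μ + ∫ x, h x ∂μ) / 2 - a := by
        rw [integral_sub hgh (integrable_const a), integral_div, integral_add hg hh,
          integral_const, probReal_univ, one_smul]

theorem continuous_integral_sq_dist {X : Type*} [MetricSpace X] [MeasurableSpace X]
    {μ : Measure X} [IsFiniteMeasure μ] (hmom : ∀ z : X, Integrable (fun x => dist z x ^ 2) μ) :
    Continuous fun z => ∫ x, dist z x ^ 2 ∂μ := by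
  refine continuous_iff_continuousAt.2 fun z₀ =>
    continuousAt_of_dominated (bound := fun x => 2 * dist z₀ x ^ 2 + 2)
      (Eventually.of_forall fun z => (hmom z).aestronglyMeasurable) ?_
      (((hmom z₀).const_mul 2).add (integrable_const 2))
      (Eventually.of_forall fun x => ((continuous_id.dist continuous_const).pow 2).continuousAt)
  filter_upwards [Metric.ball_mem_nhds z₀ one_pos] with z hz
  refine Eventually.of_forall fun x => ?_
  have hzx : dist z x ≤ 1 + dist z₀ x := by
    linarith [dist_triangle z z₀ x, Metric.mem_ball.1 hz]
  rw [Real.norm_eq_abs, abs_of_nonneg (sq_nonneg _)]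
  nlinarith [dist_nonneg (x := z) (y := x), sq_nonneg (dist z₀ x - 1)]

theorem exists_unique_barycenter_general
    {X : Type*} [MetricSpace X] [CompleteSpace X] [MeasurableSpace X]
    (hgeo : ∀ x y : X, ∃ γ : ℝ → X, IsGeodesic γ ∧ γ 0 = x ∧ γ 1 = y)
    (hconv : ∃ k : ℝ, 0 < k ∧ ∀ (x y z : X) (γ : ℝ → X), IsGeodesic γ → γ 0 = x → γ 1 = y →
      ∀ t ∈ Set.Icc (0 : ℝ) 1,
        dist z (γ t) ^ 2 ≤ (1 - t) * dist z x ^ 2 + t * dist z y ^ 2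
          - (k / 2) * t * (1 - t) * dist x y ^ 2)
    (μ : Measure X) [IsProbabilityMeasure μ]
    (hmom : ∀ z : X, Integrable (fun x => dist z x ^ 2) μ) :
    ∃! b : X, ∀ z : X, ∫ x, dist b x ^ 2 ∂μ ≤ ∫ x, dist z x ^ 2 ∂μ := by
  obtain ⟨k, hk, hconv⟩ := hconv
  have := nonempty_of_isProbabilityMeasure μ
  refine exists_unique_forall_le_of_midpoint_le (c := k / 8) (by positivity)
    (continuous_integral_sq_dist hmom).lowerSemicontinuous
    ⟨0, Set.forall_mem_range.2 fun z => integral_nonneg fun x => sq_nonneg _⟩ fun z z' => ?_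
  obtain ⟨γ, hγ, hγ0, hγ1⟩ := hgeo z z'
  refine ⟨γ (1 / 2), integral_le_half_add_sub_of_le (hmom _) (hmom z) (hmom z') fun x => ?_⟩
  have h := hconv z z' x γ hγ hγ0 hγ1 (1 / 2) (by norm_num)
  rw [dist_comm x, dist_comm x, dist_comm x] at h
  linarith

/-- In a complete geodesic metric space satisfying the uniform convexity inequality
with constant `k > 0`, every Borel probability measure with finite second moment
admits a unique barycenter, i.e. a unique minimizer of `z ↦ ∫ d(z,x)² dμ(x)`. -/
theorem exists_unique_barycenter
    {X : Type*} [MetricSpace X] [CompleteSpace X] [MeasurableSpace X] [BorelSpace X]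
    (hgeo : ∀ x y : X, ∃ γ : ℝ → X, IsGeodesic γ ∧ γ 0 = x ∧ γ 1 = y)
    (hconv : ∃ k : ℝ, 0 < k ∧ ∀ (x y z : X) (γ : ℝ → X), IsGeodesic γ → γ 0 = x → γ 1 = y →
      ∀ t ∈ Set.Icc (0 : ℝ) 1,
        dist z (γ t) ^ 2 ≤ (1 - t) * dist z x ^ 2 + t * dist z y ^ 2
          - (k / 2) * t * (1 - t) * dist x y ^ 2)
    (μ : Measure X) [IsProbabilityMeasure μ]
    (hmom : ∀ z : X, Integrable (fun x => dist z x ^ 2) μ) :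
    ∃! b : X, ∀ z : X, ∫ x, dist b x ^ 2 ∂μ ≤ ∫ x, dist z x ^ 2 ∂μ :=
  exists_unique_barycenter_general hgeo hconv μ hmom
end

section
/- Let (X,d) be a complete metric space satisfying the uniform convexity inequality: for all x,y,z ∈ X and every midpoint m of x and y, d(z,m)² ≤ ½d(z,x)² + ½d(z,y)² - (k/8)d(x,y)² with some constant k > 0, and assume midpoints exist for every pair. Let C ⊆ X be a closed subset that is closed under taking midpoints. Then for every x ∈ X there exists a unique point π(x) ∈ C such that d(x,π(x)) = inf_{y∈C} d(x,y). -/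
/-- `m` is a midpoint of `x` and `y`. -/
def IsMidpoint {X : Type*} [MetricSpace X] (m x y : X) : Prop :=
  dist x m = dist x y / 2 ∧ dist m y = dist x y / 2

/-!
Uniform convexity applied at the midpoint `m ∈ C` of two points `u, v ∈ C` gives
`(k/8) d(u,v)² ≤ ½ d(x,u)² + ½ d(x,v)² - d(x,m)²`, and `d(x,m)` is at least
`δ = inf_{y ∈ C} d(x,y)`. Hence two points of `C` whose distances to `x` are both close
to `δ` are close to each other: a minimizing sequence is Cauchy, its limit lies in the
closed set `C` and realizes `δ`, and two minimizers are at distance `0`.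
-/

open Filter Topology Metric

section UniformlyConvex

variable {X : Type*} [MetricSpace X] {k : ℝ} {C : Set X}

theorem sInf_image_dist_eq_infDist (x : X) : sInf (dist x '' C) = infDist x C := by
  rw [sInf_image', infDist_eq_iInf]

theorem exists_seq_mem_tendsto_infDist (hC : C.Nonempty) (x : X) :
    ∃ y : ℕ → X, (∀ n, y n ∈ C) ∧ Tendsto (fun n ↦ dist x (y n)) atTop (𝓝 (infDist x C)) := by
  obtain ⟨u, -, -, hu, huC⟩ := (isGLB_infDist (x := x) hC).exists_seq_antitone_tendsto (hC.image _)
  choose y hyC hyu using huC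
  exact ⟨y, hyC, by simpa only [hyu] using hu⟩

variable (hmid : ∀ x y : X, ∃ m : X, IsMidpoint m x y)
  (hconv : ∀ x y z m : X, IsMidpoint m x y →
    dist z m ^ 2 ≤ (1 / 2) * dist z x ^ 2 + (1 / 2) * dist z y ^ 2 - (k / 8) * dist x y ^ 2)
  (hCmid : ∀ x ∈ C, ∀ y ∈ C, ∀ m : X, IsMidpoint m x y → m ∈ C)
include hmid hconv hCmid

theorem mul_sq_dist_le_sub_sq_infDist {u v : X} (hu : u ∈ C) (hv : v ∈ C) (x : X) :
    k / 8 * dist u v ^ 2 ≤ (dist x u ^ 2 + dist x v ^ 2) / 2 - infDist x C ^ 2 := by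
  obtain ⟨m, hm⟩ := hmid u v
  have hxm : infDist x C ^ 2 ≤ dist x m ^ 2 :=
    pow_le_pow_left₀ infDist_nonneg (infDist_le_dist_of_mem (hCmid u hu v hv m hm)) 2
  linarith [hconv u v x m hm]

theorem cauchySeq_of_tendsto_dist_infDist (hk : 0 < k) {β : Type*} [Nonempty β]
    [SemilatticeSup β] {y : β → X} (hyC : ∀ n, y n ∈ C) {x : X}
    (hy : Tendsto (fun n ↦ dist x (y n)) atTop (𝓝 (infDist x C))) : CauchySeq y := by
  have hexcess : Tendsto (fun n ↦ dist x (y n) ^ 2 - infDist x C ^ 2) atTop (𝓝 0) := by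
    have := (hy.pow 2).sub_const (infDist x C ^ 2)
    rwa [sub_self] at this
  refine Metric.cauchySeq_iff.2 fun ε hε ↦ ?_
  obtain ⟨N, hN⟩ := eventually_atTop.1 (hexcess.eventually (gt_mem_nhds (by positivity :
    0 < k / 8 * ε ^ 2)))
  refine ⟨N, fun m hm n hn ↦ lt_of_pow_lt_pow_left₀ 2 hε.le ?_⟩
  have hmn := mul_sq_dist_le_sub_sq_infDist hmid hconv hCmid (hyC m) (hyC n) x
  have hsq : k / 8 * dist (y m) (y n) ^ 2 < k / 8 * ε ^ 2 := by linarith [hN m hm, hN n hn]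
  exact lt_of_mul_lt_mul_left hsq (by positivity)

theorem eq_of_dist_eq_infDist (hk : 0 < k) {x p q : X} (hp : p ∈ C) (hq : q ∈ C)
    (hpx : dist x p = infDist x C) (hqx : dist x q = infDist x C) : p = q := by
  have hpq := mul_sq_dist_le_sub_sq_infDist hmid hconv hCmid hp hq x
  rw [hpx, hqx] at hpq
  have hpq0 : dist p q ^ 2 ≤ 0 := by nlinarith
  exact dist_eq_zero.1 (sq_eq_zero_iff.1 (hpq0.antisymm (sq_nonneg _)))

end UniformlyConvex

/-- In a complete metric space with midpoints satisfying the uniform convexity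
inequality `d(z,m)² ≤ ½d(z,x)² + ½d(z,y)² - (k/8)d(x,y)²` for some `k > 0`,
every nonempty closed midpoint-closed subset `C` admits, for each point `x`, a
unique nearest point `p ∈ C` (the orthogonal projection). -/
theorem exists_unique_nearest_point
    {X : Type*} [MetricSpace X] [CompleteSpace X]
    (k : ℝ) (hk : 0 < k)
    (hmid : ∀ x y : X, ∃ m : X, IsMidpoint m x y)
    (hconv : ∀ x y z m : X, IsMidpoint m x y →
      dist z m ^ 2 ≤ (1 / 2) * dist z x ^ 2 + (1 / 2) * dist z y ^ 2 - (k / 8) * dist x y ^ 2)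
    (C : Set X) (hC : IsClosed C) (hCne : C.Nonempty)
    (hCmid : ∀ x ∈ C, ∀ y ∈ C, ∀ m : X, IsMidpoint m x y → m ∈ C) :
    ∀ x : X, ∃! p : X, p ∈ C ∧ dist x p = sInf ((dist x) '' C) := by
  intro x
  rw [sInf_image_dist_eq_infDist]
  obtain ⟨y, hyC, hy⟩ := exists_seq_mem_tendsto_infDist hCne x
  obtain ⟨p, hp⟩ := cauchySeq_tendsto_of_complete
    (cauchySeq_of_tendsto_dist_infDist hmid hconv hCmid hk hyC hy)
  have hpC : p ∈ C := hC.mem_of_tendsto hp (.of_forall hyC)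
  have hpx : dist x p = infDist x C := tendsto_nhds_unique (tendsto_const_nhds.dist hp) hy
  exact ⟨p, ⟨hpC, hpx⟩, fun q ⟨hqC, hqx⟩ ↦
    eq_of_dist_eq_infDist hmid hconv hCmid hk hqC hpC hqx hpx⟩
end

section
/- Let (X,d) be a complete CAT(0) space, μ a Borel probability measure on X with finite second moment, and φ: X → ℝ a lower semi-continuous convex function that is μ-integrable. Then φ(𝔅(μ)) ≤ ∫ φ(x) dμ(x), where 𝔅(μ) is the barycenter of μ. -/
open MeasureTheory

/-- A geodesic metric space is CAT(0) iff the squared distance satisfies the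
convexity comparison inequality along all geodesics. -/
def CATZero (X : Type*) [MetricSpace X] : Prop :=
  (∀ x y : X, ∃ γ : ℝ → X, IsGeodesic γ ∧ γ 0 = x ∧ γ 1 = y) ∧
  ∀ (x y z : X) (γ : ℝ → X), IsGeodesic γ → γ 0 = x → γ 1 = y →
    ∀ t ∈ Set.Icc (0 : ℝ) 1,
      dist z (γ t) ^ 2 ≤ (1 - t) * dist z x ^ 2 + t * dist z y ^ 2
        - t * (1 - t) * dist x y ^ 2

/-- A function on a geodesic metric space is convex if its composition with every
geodesic is convex. -/
def GeoConvexFun {X : Type*} [MetricSpace X] (φ : X → ℝ) : Prop :=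
  ∀ (x y : X) (γ : ℝ → X), IsGeodesic γ → γ 0 = x → γ 1 = y →
    ∀ t ∈ Set.Icc (0 : ℝ) 1, φ (γ t) ≤ (1 - t) * φ x + t * φ y


/-!
Project the point `(b, ∫ φ dμ)` onto the epigraph of `φ` in the `ℓ²` product `X × ℝ`. The
epigraph is closed by lower semicontinuity and inherits the CAT(0) comparison inequality, so a
nearest point `p` exists and satisfies `d(a, p)² + d(p, c)² ≤ d(a, c)²` for all `c` in the
epigraph. Taking `c = (x, φ x)` and integrating in `x`, the cross term vanishes because `∫ φ dμ`
is the mean of `φ`, and the minimality of `b` then forces `p = (b, ∫ φ dμ)`.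
-/

open Filter Topology Metric WithLp

theorem WithLp.prod_dist_sq_eq_of_L2 {α β : Type*} [Dist α] [Dist β] (x y : WithLp 2 (α × β)) :
    dist x y ^ 2 = dist x.fst y.fst ^ 2 + dist x.snd y.snd ^ 2 := by
  rw [prod_dist_eq_add (by norm_num), ENNReal.toReal_ofNat, ← Real.sqrt_eq_rpow]
  simp only [Real.rpow_two]
  exact Real.sq_sqrt (by positivity)

section CATZeroConvex

variable {Y : Type*} [MetricSpace Y]

/-- `r` stands for the point at time `t` on a geodesic from `p` to `q`; geodesically convex
subsets of CAT(0) spaces have this property. -/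
def IsCATZeroConvex (C : Set Y) : Prop :=
  ∀ p ∈ C, ∀ q ∈ C, ∀ t ∈ Set.Icc (0 : ℝ) 1, ∃ r ∈ C, ∀ a : Y,
    dist a r ^ 2 ≤ (1 - t) * dist a p ^ 2 + t * dist a q ^ 2 - t * (1 - t) * dist p q ^ 2

variable {C : Set Y}

theorem IsCATZeroConvex.dist_sq_le (hC : IsCATZeroConvex C) {p q : Y} (hp : p ∈ C) (hq : q ∈ C)
    (a : Y) : dist p q ^ 2 ≤ 2 * dist a p ^ 2 + 2 * dist a q ^ 2 - 4 * infDist a C ^ 2 := by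
  obtain ⟨r, hr, hmid⟩ := hC p hp q hq (1 / 2) ⟨by norm_num, by norm_num⟩
  have hinf : infDist a C ≤ dist a r := infDist_le_dist_of_mem hr
  nlinarith [hmid a, infDist_nonneg (x := a) (s := C)]

theorem IsCATZeroConvex.dist_sq_add_dist_sq_le (hC : IsCATZeroConvex C) {a p c : Y}
    (hp : p ∈ C) (hmin : ∀ y ∈ C, dist a p ≤ dist a y) (hc : c ∈ C) :
    dist a p ^ 2 + dist p c ^ 2 ≤ dist a c ^ 2 := by
  -- compare `a` with the point at time `t` from `p` to `c`, then let `t → 0`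
  have hle : ∀ t ∈ Set.Ioc (0 : ℝ) 1, dist a p ^ 2 + (1 - t) * dist p c ^ 2 ≤ dist a c ^ 2 := by
    rintro t ⟨ht0, ht1⟩
    obtain ⟨r, hr, hcomb⟩ := hC p hp c hc t ⟨ht0.le, ht1⟩
    have hpr : dist a p ^ 2 ≤ dist a r ^ 2 := pow_le_pow_left₀ dist_nonneg (hmin r hr) 2
    have := hcomb a
    refine le_of_mul_le_mul_left ?_ ht0
    nlinarith
  have hlim : Tendsto (fun t : ℝ => dist a p ^ 2 + (1 - t) * dist p c ^ 2) (𝓝[>] 0)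
      (𝓝 (dist a p ^ 2 + dist p c ^ 2)) := by
    have hcont : Continuous (fun t : ℝ => dist a p ^ 2 + (1 - t) * dist p c ^ 2) := by fun_prop
    simpa using hcont.tendsto 0 |>.mono_left nhdsWithin_le_nhds
  exact le_of_tendsto hlim (eventually_of_mem (Ioc_mem_nhdsGT one_pos) hle)

theorem IsClosed.exists_infDist_eq_dist_of_isCATZeroConvex [CompleteSpace Y]
    (hclosed : IsClosed C) (hC : IsCATZeroConvex C) (hne : C.Nonempty) (a : Y) :
    ∃ p ∈ C, infDist a C = dist a p := by
  set δ := infDist a C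
  have hseq : ∀ n : ℕ, ∃ u ∈ C, dist a u < δ + 1 / (n + 1) := fun n =>
    (infDist_lt_iff hne).1 (by simp only [δ]; linarith [Nat.one_div_pos_of_nat (α := ℝ) (n := n)])
  choose u huC hu using hseq
  have hδ : Tendsto (fun n : ℕ => δ + 1 / ((n : ℝ) + 1)) atTop (𝓝 δ) := by
    simpa using tendsto_const_nhds.add (tendsto_one_div_add_atTop_nhds_zero_nat (𝕜 := ℝ))
  have hdist : Tendsto (fun n => dist a (u n)) atTop (𝓝 δ) :=
    tendsto_of_tendsto_of_tendsto_of_le_of_le tendsto_const_nhds hδ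
      (fun n => infDist_le_dist_of_mem (huC n)) (fun n => (hu n).le)
  have hcauchy : CauchySeq u := by
    refine cauchySeq_of_le_tendsto_0
      (fun N => √(4 * (δ + 1 / ((N : ℝ) + 1)) ^ 2 - 4 * δ ^ 2)) (fun n k N hn hk => ?_) ?_
    · have hbound : ∀ n, N ≤ n → dist a (u n) ^ 2 ≤ (δ + 1 / ((N : ℝ) + 1)) ^ 2 := fun n hn =>
        pow_le_pow_left₀ dist_nonneg ((hu n).le.trans (by gcongr)) 2
      refine Real.le_sqrt_of_sq_le ?_
      linarith [hC.dist_sq_le (huC n) (huC k) a, hbound n hn, hbound k hk]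
    · have := ((hδ.pow 2).const_mul 4 |>.sub_const (4 * δ ^ 2)).sqrt
      rwa [sub_self, Real.sqrt_zero] at this
  obtain ⟨p, hup⟩ := cauchySeq_tendsto_of_complete hcauchy
  exact ⟨p, hclosed.mem_of_tendsto hup (Eventually.of_forall huC),
    tendsto_nhds_unique hdist (tendsto_const_nhds.dist hup)⟩

theorem IsClosed.exists_dist_sq_add_dist_sq_le_of_isCATZeroConvex [CompleteSpace Y]
    (hclosed : IsClosed C) (hC : IsCATZeroConvex C) (hne : C.Nonempty) (a : Y) :
    ∃ p ∈ C, ∀ c ∈ C, dist a p ^ 2 + dist p c ^ 2 ≤ dist a c ^ 2 := by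
  obtain ⟨p, hp, hinf⟩ := hclosed.exists_infDist_eq_dist_of_isCATZeroConvex hC hne a
  exact ⟨p, hp, fun c hc =>
    hC.dist_sq_add_dist_sq_le hp (fun y hy => hinf ▸ infDist_le_dist_of_mem hy) hc⟩

end CATZeroConvex

def l2Epigraph {X : Type*} (φ : X → ℝ) : Set (WithLp 2 (X × ℝ)) :=
  {q | φ q.fst ≤ q.snd}

theorem LowerSemicontinuous.isClosed_l2Epigraph {X : Type*} [MetricSpace X] {φ : X → ℝ}
    (hφ : LowerSemicontinuous φ) : IsClosed (l2Epigraph φ) :=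
  hφ.isClosed_epigraph.preimage (prod_continuous_ofLp 2 X ℝ)

theorem GeoConvexFun.isCATZeroConvex_l2Epigraph {X : Type*} [MetricSpace X] (hX : CATZero X)
    {φ : X → ℝ} (hφ : GeoConvexFun φ) : IsCATZeroConvex (l2Epigraph φ) := by
  rintro p hp q hq t ht
  obtain ⟨γ, hγ, hγ0, hγ1⟩ := hX.1 p.fst q.fst
  refine ⟨toLp 2 (γ t, (1 - t) * p.snd + t * q.snd), ?_, fun a => ?_⟩
  · have hγt := hφ _ _ γ hγ hγ0 hγ1 t ht
    have ht' : 0 ≤ 1 - t := sub_nonneg.2 ht.2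
    show φ (γ t) ≤ (1 - t) * p.snd + t * q.snd
    nlinarith [mul_le_mul_of_nonneg_left hp ht', mul_le_mul_of_nonneg_left hq ht.1]
  · simp only [WithLp.prod_dist_sq_eq_of_L2, toLp_fst, toLp_snd, Real.dist_eq, sq_abs]
    linear_combination hX.2 _ _ a.fst γ hγ hγ0 hγ1 t ht

theorem integral_le_integral_of_le_add_mul_sub_integral {α : Type*} [MeasurableSpace α]
    {μ : Measure α} [IsProbabilityMeasure μ] {f g h : α → ℝ} (hf : Integrable f μ)
    (hg : Integrable g μ) (hh : Integrable h μ) (k : ℝ)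
    (hle : ∀ x, f x ≤ h x + k * (g x - ∫ y, g y ∂μ)) : ∫ x, f x ∂μ ≤ ∫ x, h x ∂μ := by
  have hcentered : Integrable (fun x => k * (g x - ∫ y, g y ∂μ)) μ :=
    (hg.sub (integrable_const _)).const_mul k
  calc ∫ x, f x ∂μ ≤ ∫ x, (h x + k * (g x - ∫ y, g y ∂μ)) ∂μ :=
        integral_mono hf (hh.add hcentered) hle
    _ = ∫ x, h x ∂μ := by
        rw [integral_add hh hcentered, integral_const_mul, integral_sub hg (integrable_const _),
          integral_const, probReal_univ, one_smul, sub_self, mul_zero, add_zero]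

theorem barycenter_jensen_general
    {X : Type*} [MetricSpace X] [CompleteSpace X] [MeasurableSpace X]
    (hX : CATZero X)
    (μ : Measure X) [IsProbabilityMeasure μ]
    (hmom : ∀ z : X, Integrable (fun x => dist z x ^ 2) μ)
    (φ : X → ℝ) (hφlsc : LowerSemicontinuous φ) (hφconv : GeoConvexFun φ)
    (hφint : Integrable φ μ)
    (b : X) (hb : ∀ z : X, ∫ x, dist b x ^ 2 ∂μ ≤ ∫ x, dist z x ^ 2 ∂μ) :
    φ b ≤ ∫ x, φ x ∂μ := by
  set m := ∫ x, φ x ∂μ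
  obtain ⟨p, hp, hproj⟩ :=
    hφlsc.isClosed_l2Epigraph.exists_dist_sq_add_dist_sq_le_of_isCATZeroConvex
      (hφconv.isCATZeroConvex_l2Epigraph hX) ⟨toLp 2 (b, φ b), le_refl (φ b)⟩ (toLp 2 (b, m))
  set c := dist b p.fst ^ 2 + 2 * (m - p.snd) ^ 2
  have hpt : ∀ x, c + dist p.fst x ^ 2 ≤ dist b x ^ 2 + 2 * (p.snd - m) * (φ x - m) := by
    intro x
    have := hproj (toLp 2 (x, φ x)) (le_refl (φ x))
    simp only [WithLp.prod_dist_sq_eq_of_L2, toLp_fst, toLp_snd, Real.dist_eq, sq_abs] at this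
    linear_combination this
  have hint : c + ∫ x, dist p.fst x ^ 2 ∂μ ≤ ∫ x, dist b x ^ 2 ∂μ := by
    have := integral_le_integral_of_le_add_mul_sub_integral (f := fun x => c + dist p.fst x ^ 2)
      ((integrable_const c).add (hmom p.fst)) hφint (hmom b) _ hpt
    rwa [integral_add (integrable_const c) (hmom p.fst), integral_const, probReal_univ,
      one_smul] at this
  have hc : c ≤ 0 := by linarith [hb p.fst]
  have hbp : b = p.fst := dist_le_zero.1 (by nlinarith [sq_nonneg (m - p.snd)])
  have hpm : p.snd = m := by nlinarith [sq_nonneg (dist b p.fst)]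
  calc φ b = φ p.fst := by rw [hbp]
    _ ≤ p.snd := hp
    _ = m := hpm

/-- Jensen's inequality for barycenters in complete CAT(0) spaces: for a lower
semicontinuous convex integrable `φ`, we have `φ(𝔅(μ)) ≤ ∫ φ dμ`. -/
theorem barycenter_jensen
    {X : Type*} [MetricSpace X] [CompleteSpace X] [MeasurableSpace X] [BorelSpace X]
    (hX : CATZero X)
    (μ : Measure X) [IsProbabilityMeasure μ]
    (hmom : ∀ z : X, Integrable (fun x => dist z x ^ 2) μ)
    (φ : X → ℝ) (hφlsc : LowerSemicontinuous φ) (hφconv : GeoConvexFun φ)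
    (hφint : Integrable φ μ)
    (b : X) (hb : ∀ z : X, ∫ x, dist b x ^ 2 ∂μ ≤ ∫ x, dist z x ^ 2 ∂μ) :
    φ b ≤ ∫ x, φ x ∂μ :=
  barycenter_jensen_general hX μ hmom φ hφlsc hφconv hφint b hb
end

section
/- Let (X,d) be a complete CAT(0) space and μ₁, μ₂ ∈ 𝒫₂(X). Then d(𝔅(μ₁), 𝔅(μ₂)) ≤ W₁(μ₁, μ₂) ≤ W₂(μ₁, μ₂), where 𝔅 denotes the barycenter map and W_p the Wasserstein-p distance. -/
open MeasureTheory

/-- The Wasserstein-`p` distance between two Borel probability measures, defined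
as the infimum over couplings of the `p`-th cost. -/
noncomputable def wassersteinDist {X : Type*} [MetricSpace X] [MeasurableSpace X]
    (p : ℝ) (μ₁ μ₂ : Measure X) : ℝ :=
  sInf {r : ℝ | ∃ π : Measure (X × X), IsProbabilityMeasure π ∧
    π.map Prod.fst = μ₁ ∧ π.map Prod.snd = μ₂ ∧
    r = (∫ w : X × X, dist w.1 w.2 ^ p ∂π) ^ (1 / p)}

/-!
Two consequences of the CAT(0) comparison inequality carry the proof. Applied at the point
`γ t` of the geodesic from `a` to `y` and combined with the triangle inequality through `γ t`,
it gives, for `t = d(a,b) / (d(a,b) + d(x,y))`, the quadrilateral inequality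
`d(a,y)² + d(b,x)² - d(a,x)² - d(b,y)² ≤ 2 d(a,b) d(x,y)`. Integrated along the geodesic from a
barycenter `b` to `z` and letting `t → 0`, it gives the variance inequality
`∫ d(b,·)² + d(b,z)² ≤ ∫ d(z,·)²`. For a coupling `π` of `μ₁, μ₂`, the sum of the variance
inequalities of `b₁` and `b₂` is the `π`-integral of a quadrilateral expression, so
`2 d(b₁,b₂)² ≤ 2 d(b₁,b₂) ∫ d dπ`. Finally `∫ d dπ ≤ (∫ d² dπ)^(1/2)` coupling by coupling.
-/

open Set MeasureTheory Filter Topology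

lemma mul_one_sub_mul_sq_le_of_le_add {d u v t : ℝ} (hd : 0 ≤ d) (h : d ≤ u + v)
    (ht : t ∈ Icc (0 : ℝ) 1) :
    t * (1 - t) * d ^ 2 ≤ t * u ^ 2 + (1 - t) * v ^ 2 := by
  have hsq : d ^ 2 ≤ (u + v) ^ 2 := pow_le_pow_left₀ hd h 2
  nlinarith [mul_nonneg ht.1 (sub_nonneg.2 ht.2), sq_nonneg (t * u - (1 - t) * v)]

theorem integral_fst_add_snd {α β : Type*} [MeasurableSpace α] [MeasurableSpace β]
    {π : Measure (α × β)} {f : α → ℝ} {g : β → ℝ}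
    (hf : Integrable f (π.map Prod.fst)) (hg : Integrable g (π.map Prod.snd)) :
    ∫ w, (f w.1 + g w.2) ∂π = ∫ x, f x ∂(π.map Prod.fst) + ∫ y, g y ∂(π.map Prod.snd) := by
  have hf' : Integrable (fun w : α × β => f w.1) π := hf.comp_measurable measurable_fst
  have hg' : Integrable (fun w : α × β => g w.2) π := hg.comp_measurable measurable_snd
  rw [integral_add hf' hg', integral_map measurable_fst.aemeasurable hf.aestronglyMeasurable,
    integral_map measurable_snd.aemeasurable hg.aestronglyMeasurable]

theorem integrable_dist_sq_of_map {X : Type*} [MetricSpace X] [MeasurableSpace X] [BorelSpace X]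
    [SecondCountableTopology X] {π : Measure (X × X)} (b : X)
    (h₁ : Integrable (fun x => dist b x ^ 2) (π.map Prod.fst))
    (h₂ : Integrable (fun x => dist b x ^ 2) (π.map Prod.snd)) :
    Integrable (fun w : X × X => dist w.1 w.2 ^ 2) π := by
  refine (((h₁.comp_measurable measurable_fst).add
    (h₂.comp_measurable measurable_snd)).const_mul 2).mono'
    (continuous_dist.pow 2).aestronglyMeasurable (ae_of_all _ fun w => ?_)
  have htri := dist_triangle_left w.1 w.2 b
  simp only [Real.norm_eq_abs, abs_pow, abs_dist, Pi.add_apply, Function.comp_apply]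
  nlinarith [dist_nonneg (x := w.1) (y := w.2), sq_nonneg (dist b w.1 - dist b w.2)]

section Jensen

variable {Ω : Type*} [MeasurableSpace Ω] {μ : Measure Ω} [IsProbabilityMeasure μ] {f : Ω → ℝ}

theorem sq_integral_le_integral_sq (hf : MemLp f 2 μ) :
    (∫ ω, f ω ∂μ) ^ 2 ≤ ∫ ω, f ω ^ 2 ∂μ := by
  have h := ProbabilityTheory.variance_nonneg f μ
  rw [ProbabilityTheory.variance_eq_sub hf] at h
  simpa using h

theorem integral_le_sqrt_integral_sq (hf : MemLp f 2 μ) :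
    ∫ ω, f ω ∂μ ≤ √(∫ ω, f ω ^ 2 ∂μ) :=
  (le_abs_self _).trans (Real.abs_le_sqrt (sq_integral_le_integral_sq hf))

end Jensen

namespace CATZero

variable {X : Type*} [MetricSpace X]

theorem quadrilateral_le_weighted (hX : CATZero X) (a b x y : X) {t : ℝ}
    (ht : t ∈ Icc (0 : ℝ) 1) :
    t * (1 - t) * (dist a y ^ 2 + dist b x ^ 2 - dist a x ^ 2 - dist b y ^ 2) ≤
      t ^ 2 * dist x y ^ 2 + (1 - t) ^ 2 * dist a b ^ 2 := by
  obtain ⟨γ, hγ, hγ0, hγ1⟩ := hX.1 a y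
  have hx := hX.2 a y x γ hγ hγ0 hγ1 t ht
  have hb := hX.2 a y b γ hγ hγ0 hγ1 t ht
  have htri : t * (1 - t) * dist b x ^ 2 ≤
      t * dist x (γ t) ^ 2 + (1 - t) * dist b (γ t) ^ 2 :=
    mul_one_sub_mul_sq_le_of_le_add dist_nonneg
      (by simpa only [dist_comm] using dist_triangle x (γ t) b) ht
  rw [dist_comm x a, dist_comm b a] at *
  nlinarith [mul_le_mul_of_nonneg_left hx ht.1,
    mul_le_mul_of_nonneg_left hb (sub_nonneg.2 ht.2)]

theorem quadrilateral_le (hX : CATZero X) (a b x y : X) :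
    dist a y ^ 2 + dist b x ^ 2 - dist a x ^ 2 - dist b y ^ 2 ≤ 2 * dist a b * dist x y := by
  rcases eq_or_ne a b with rfl | hab
  · simp
  rcases eq_or_ne x y with rfl | hxy
  · simp
  have hA := dist_pos.2 hab
  have hδ := dist_pos.2 hxy
  set A := dist a b
  set δ := dist x y
  have ht : A / (A + δ) ∈ Icc (0 : ℝ) 1 :=
    ⟨by positivity, div_le_one_of_le₀ (by linarith) (by positivity)⟩
  have h := hX.quadrilateral_le_weighted a b x y ht
  rw [one_sub_div (by positivity : A + δ ≠ 0)] at h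
  field_simp at h
  nlinarith [mul_pos hA hδ]

variable [MeasurableSpace X]

theorem integral_dist_sq_geodesic_le (hX : CATZero X) {μ : Measure X} [IsProbabilityMeasure μ]
    (hmom : ∀ z : X, Integrable (fun x => dist z x ^ 2) μ) {γ : ℝ → X} (hγ : IsGeodesic γ)
    {b z : X} (hγ0 : γ 0 = b) (hγ1 : γ 1 = z) {t : ℝ} (ht : t ∈ Icc (0 : ℝ) 1) :
    ∫ x, dist (γ t) x ^ 2 ∂μ ≤ (1 - t) * ∫ x, dist b x ^ 2 ∂μ + t * ∫ x, dist z x ^ 2 ∂μ -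
      t * (1 - t) * dist b z ^ 2 := by
  have hint : Integrable (fun x => (1 - t) * dist b x ^ 2 + t * dist z x ^ 2) μ :=
    ((hmom b).const_mul _).add ((hmom z).const_mul _)
  calc ∫ x, dist (γ t) x ^ 2 ∂μ
      ≤ ∫ x, ((1 - t) * dist b x ^ 2 + t * dist z x ^ 2 - t * (1 - t) * dist b z ^ 2) ∂μ :=
        integral_mono (hmom (γ t)) (hint.sub (integrable_const _)) fun x => by
          simpa only [dist_comm x] using hX.2 b z x γ hγ hγ0 hγ1 t ht
    _ = _ := by
        rw [integral_sub hint (integrable_const _),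
          integral_add ((hmom b).const_mul _) ((hmom z).const_mul _), integral_const_mul,
          integral_const_mul, integral_const, probReal_univ, one_smul]

theorem integral_dist_sq_add_dist_sq_le (hX : CATZero X) {μ : Measure X}
    [IsProbabilityMeasure μ] (hmom : ∀ z : X, Integrable (fun x => dist z x ^ 2) μ) {b : X}
    (hb : ∀ z : X, ∫ x, dist b x ^ 2 ∂μ ≤ ∫ x, dist z x ^ 2 ∂μ) (z : X) :
    ∫ x, dist b x ^ 2 ∂μ + dist b z ^ 2 ≤ ∫ x, dist z x ^ 2 ∂μ := by
  obtain ⟨γ, hγ, hγ0, hγ1⟩ := hX.1 b z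
  have hpos : ∀ t ∈ Ioo (0 : ℝ) 1,
      ∫ x, dist b x ^ 2 ∂μ + (1 - t) * dist b z ^ 2 ≤ ∫ x, dist z x ^ 2 ∂μ := by
    intro t ht
    have h := hX.integral_dist_sq_geodesic_le hmom hγ hγ0 hγ1 (Ioo_subset_Icc_self ht)
    nlinarith [hb (γ t), ht.1]
  have hlim : Tendsto (fun t : ℝ => ∫ x, dist b x ^ 2 ∂μ + (1 - t) * dist b z ^ 2)
      (𝓝[>] 0) (𝓝 (∫ x, dist b x ^ 2 ∂μ + (1 - 0) * dist b z ^ 2)) :=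
    ((continuous_const.add ((continuous_const.sub continuous_id).mul
      continuous_const)).tendsto 0).mono_left nhdsWithin_le_nhds
  rw [sub_zero, one_mul] at hlim
  exact le_of_tendsto hlim (eventually_of_mem (Ioo_mem_nhdsGT one_pos) hpos)

variable [BorelSpace X] [SecondCountableTopology X]

theorem dist_le_integral_dist_of_coupling (hX : CATZero X) {π : Measure (X × X)}
    [IsProbabilityMeasure π]
    (hmom₁ : ∀ z : X, Integrable (fun x => dist z x ^ 2) (π.map Prod.fst))
    (hmom₂ : ∀ z : X, Integrable (fun x => dist z x ^ 2) (π.map Prod.snd)) {b₁ b₂ : X}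
    (hb₁ : ∀ z : X, ∫ x, dist b₁ x ^ 2 ∂(π.map Prod.fst) ≤ ∫ x, dist z x ^ 2 ∂(π.map Prod.fst))
    (hb₂ : ∀ z : X, ∫ x, dist b₂ x ^ 2 ∂(π.map Prod.snd) ≤ ∫ x, dist z x ^ 2 ∂(π.map Prod.snd)) :
    dist b₁ b₂ ≤ ∫ w, dist w.1 w.2 ∂π := by
  have := Measure.isProbabilityMeasure_map (μ := π) measurable_fst.aemeasurable
  have := Measure.isProbabilityMeasure_map (μ := π) measurable_snd.aemeasurable
  have hdist : Integrable (fun w : X × X => dist w.1 w.2) π :=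
    ((memLp_two_iff_integrable_sq continuous_dist.aestronglyMeasurable).2
      (integrable_dist_sq_of_map b₁ (hmom₁ b₁) (hmom₂ b₁))).integrable one_le_two
  have hvar₁ := hX.integral_dist_sq_add_dist_sq_le hmom₁ hb₁ b₂
  have hvar₂ := hX.integral_dist_sq_add_dist_sq_le hmom₂ hb₂ b₁
  rw [dist_comm b₂ b₁] at hvar₂
  have hf := (hmom₁ b₂).sub (hmom₁ b₁)
  have hg := (hmom₂ b₁).sub (hmom₂ b₂)
  have key : dist b₁ b₂ * (2 * dist b₁ b₂) ≤ dist b₁ b₂ * (2 * ∫ w, dist w.1 w.2 ∂π) := calc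
    dist b₁ b₂ * (2 * dist b₁ b₂)
      ≤ ∫ w : X × X, ((dist b₂ w.1 ^ 2 - dist b₁ w.1 ^ 2) +
          (dist b₁ w.2 ^ 2 - dist b₂ w.2 ^ 2)) ∂π := by
        rw [integral_fst_add_snd (f := fun x => dist b₂ x ^ 2 - dist b₁ x ^ 2)
          (g := fun y => dist b₁ y ^ 2 - dist b₂ y ^ 2) hf hg,
          integral_sub (hmom₁ b₂) (hmom₁ b₁), integral_sub (hmom₂ b₁) (hmom₂ b₂)]
        linarith
    _ ≤ ∫ w : X × X, 2 * dist b₁ b₂ * dist w.1 w.2 ∂π :=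
        integral_mono ((hf.comp_measurable measurable_fst).add (hg.comp_measurable measurable_snd))
          (hdist.const_mul _) fun w => by linarith [hX.quadrilateral_le b₁ b₂ w.1 w.2]
    _ = dist b₁ b₂ * (2 * ∫ w, dist w.1 w.2 ∂π) := by rw [integral_const_mul]; ring
  rcases (dist_nonneg : 0 ≤ dist b₁ b₂).eq_or_lt with h | h
  · rw [← h]
    exact integral_nonneg fun w => dist_nonneg
  · linarith [le_of_mul_le_mul_left key h]

end CATZero

section Wasserstein

variable {X : Type*} [MetricSpace X] [MeasurableSpace X]

theorem wassersteinDist_le_of_coupling (p : ℝ) (π : Measure (X × X)) [IsProbabilityMeasure π] :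
    wassersteinDist p (π.map Prod.fst) (π.map Prod.snd) ≤
      (∫ w, dist w.1 w.2 ^ p ∂π) ^ (1 / p) :=
  csInf_le ⟨0, by
      rintro _ ⟨π, -, -, -, rfl⟩
      exact Real.rpow_nonneg (integral_nonneg fun w => Real.rpow_nonneg dist_nonneg p) _⟩
    ⟨π, inferInstance, rfl, rfl, rfl⟩

theorem le_wassersteinDist {μ₁ μ₂ : Measure X} [IsProbabilityMeasure μ₁]
    [IsProbabilityMeasure μ₂] {p c : ℝ}
    (h : ∀ π : Measure (X × X), IsProbabilityMeasure π → π.map Prod.fst = μ₁ →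
      π.map Prod.snd = μ₂ → c ≤ (∫ w, dist w.1 w.2 ^ p ∂π) ^ (1 / p)) :
    c ≤ wassersteinDist p μ₁ μ₂ :=
  le_csInf ⟨_, μ₁.prod μ₂, inferInstance, by simp, by simp, rfl⟩ <| by
    rintro _ ⟨π, hπ, h₁, h₂, rfl⟩
    exact h π hπ h₁ h₂

end Wasserstein

theorem barycenter_lipschitz_wasserstein_general
    {X : Type*} [MetricSpace X] [SecondCountableTopology X]
    [MeasurableSpace X] [BorelSpace X]
    (hX : CATZero X)
    (μ₁ μ₂ : Measure X) [IsProbabilityMeasure μ₁] [IsProbabilityMeasure μ₂]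
    (hmom₁ : ∀ z : X, Integrable (fun x => dist z x ^ 2) μ₁)
    (hmom₂ : ∀ z : X, Integrable (fun x => dist z x ^ 2) μ₂)
    (b₁ b₂ : X)
    (hb₁ : ∀ z : X, ∫ x, dist b₁ x ^ 2 ∂μ₁ ≤ ∫ x, dist z x ^ 2 ∂μ₁)
    (hb₂ : ∀ z : X, ∫ x, dist b₂ x ^ 2 ∂μ₂ ≤ ∫ x, dist z x ^ 2 ∂μ₂) :
    dist b₁ b₂ ≤ wassersteinDist 1 μ₁ μ₂ ∧
      wassersteinDist 1 μ₁ μ₂ ≤ wassersteinDist 2 μ₁ μ₂ := by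
  constructor
  · refine le_wassersteinDist fun π _ h₁ h₂ => ?_
    subst h₁ h₂
    simpa using hX.dist_le_integral_dist_of_coupling hmom₁ hmom₂ hb₁ hb₂
  · refine le_wassersteinDist fun π _ h₁ h₂ => ?_
    subst h₁ h₂
    have hsq := integrable_dist_sq_of_map b₁ (hmom₁ b₁) (hmom₂ b₁)
    refine (wassersteinDist_le_of_coupling 1 π).trans ?_
    simpa [Real.rpow_two, Real.sqrt_eq_rpow, one_div] using integral_le_sqrt_integral_sq
      ((memLp_two_iff_integrable_sq continuous_dist.aestronglyMeasurable).2 hsq)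

/-- In a complete CAT(0) space, `d(𝔅(μ₁), 𝔅(μ₂)) ≤ W₁(μ₁,μ₂) ≤ W₂(μ₁,μ₂)`. -/
theorem barycenter_lipschitz_wasserstein
    {X : Type*} [MetricSpace X] [CompleteSpace X] [SecondCountableTopology X]
    [MeasurableSpace X] [BorelSpace X]
    (hX : CATZero X)
    (μ₁ μ₂ : Measure X) [IsProbabilityMeasure μ₁] [IsProbabilityMeasure μ₂]
    (hmom₁ : ∀ z : X, Integrable (fun x => dist z x ^ 2) μ₁)
    (hmom₂ : ∀ z : X, Integrable (fun x => dist z x ^ 2) μ₂)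
    (b₁ b₂ : X)
    (hb₁ : ∀ z : X, ∫ x, dist b₁ x ^ 2 ∂μ₁ ≤ ∫ x, dist z x ^ 2 ∂μ₁)
    (hb₂ : ∀ z : X, ∫ x, dist b₂ x ^ 2 ∂μ₂ ≤ ∫ x, dist z x ^ 2 ∂μ₂) :
    dist b₁ b₂ ≤ wassersteinDist 1 μ₁ μ₂ ∧
      wassersteinDist 1 μ₁ μ₂ ≤ wassersteinDist 2 μ₁ μ₂ :=
  barycenter_lipschitz_wasserstein_general hX μ₁ μ₂ hmom₁ hmom₂ b₁ b₂ hb₁ hb₂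
end
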